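/- Let I be a nonempty index set, and for each i ∈ I let H_i be a real inner product space and let u_i, p_i, q_i, w_i ∈ H_i. Define D(p, q) = sup_{i ∈ I} |⟨u_i - (p_i + q_i)/2, p_i - q_i⟩| (assumed finite for all three relevant instances). Then D(p, q) ≤ D(p, w) + D(q, w). -/
import Mathlib

open scoped InnerProductSpace

theorem amd_sup_triangle {I : Type*} [Nonempty I] {H : I → Type*}
    [∀ i, NormedAddCommGroup (H i)] [∀ i, InnerProductSpace ℝ (H i)]
    (u p q w : ∀ i, H i)
    (hpq : BddAbove (Set.range fun i =>
      |⟪u i - (2:ℝ)⁻¹ • (p i + q i), p i - q i⟫_ℝ|))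
    (hpw : BddAbove (Set.range fun i =>
      |⟪u i - (2:ℝ)⁻¹ • (p i + w i), p i - w i⟫_ℝ|))
    (hqw : BddAbove (Set.range fun i =>
      |⟪u i - (2:ℝ)⁻¹ • (q i + w i), q i - w i⟫_ℝ|)) :
    (⨆ i, |⟪u i - (2:ℝ)⁻¹ • (p i + q i), p i - q i⟫_ℝ|) ≤
      (⨆ i, |⟪u i - (2:ℝ)⁻¹ • (p i + w i), p i - w i⟫_ℝ|) +
      (⨆ i, |⟪u i - (2:ℝ)⁻¹ • (q i + w i), q i - w i⟫_ℝ|) := by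
  refine ciSup_le fun i => ?_
  have key : ⟪u i - (2:ℝ)⁻¹ • (p i + q i), p i - q i⟫_ℝ
      = ⟪u i - (2:ℝ)⁻¹ • (p i + w i), p i - w i⟫_ℝ
        - ⟪u i - (2:ℝ)⁻¹ • (q i + w i), q i - w i⟫_ℝ := by
    simp only [inner_sub_left, inner_sub_right, inner_add_left, inner_add_right,
      real_inner_smul_left, real_inner_smul_right, real_inner_comm (w i) (p i), real_inner_comm (w i) (u i), real_inner_comm (w i) (q i), real_inner_comm (q i) (p i), real_inner_comm (q i) (u i)]
    ring
  calc |⟪u i - (2:ℝ)⁻¹ • (p i + q i), p i - q i⟫_ℝ|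
      ≤ |⟪u i - (2:ℝ)⁻¹ • (p i + w i), p i - w i⟫_ℝ|
        + |⟪u i - (2:ℝ)⁻¹ • (q i + w i), q i - w i⟫_ℝ| := by
        rw [key]; exact abs_sub _ _
    _ ≤ _ := add_le_add (le_ciSup hpw i) (le_ciSup hqw i)
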